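/- Same-token self-division: for every token t, rationals 0 < lo ≤ hi, and dimension tag d, the expression Div (Meas t lo hi d) (Meas t lo hi d) is interchangeable with Exact 1 d. -/

import Mathlib

abbrev Token := ℕ

inductive Dim where
  | base
deriving DecidableEq

inductive Expr where
  | Exact (q : ℚ) (d : Dim)
  | Meas (t : Token) (lo hi : ℚ) (d : Dim)
  | Add (a b : Expr)
  | Sub (a b : Expr)
  | Mul (a b : Expr)
  | Div (a b : Expr)
  | Neg (a : Expr)

abbrev TokenEnv := Token → ℚ

def TokenConsistent (σ : TokenEnv) : Expr → Prop
  | .Exact _ _ => True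
  | .Meas t lo hi _ => lo ≤ σ t ∧ σ t ≤ hi
  | .Add a b => TokenConsistent σ a ∧ TokenConsistent σ b
  | .Sub a b => TokenConsistent σ a ∧ TokenConsistent σ b
  | .Mul a b => TokenConsistent σ a ∧ TokenConsistent σ b
  | .Div a b => TokenConsistent σ a ∧ TokenConsistent σ b
  | .Neg a => TokenConsistent σ a

def eval (σ : TokenEnv) : Expr → ℚ
  | .Exact q _ => q
  | .Meas t _ _ _ => σ t
  | .Add a b => eval σ a + eval σ b
  | .Sub a b => eval σ a - eval σ b
  | .Mul a b => eval σ a * eval σ b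
  | .Div a b => eval σ a / eval σ b
  | .Neg a => - eval σ a

def Encl (e : Expr) : Set ℚ := {v : ℚ | ∃ σ : TokenEnv, TokenConsistent σ e ∧ eval σ e = v}

def RewritesTo (e e' : Expr) : Prop := Encl e' ⊆ Encl e

def Interchangeable (e e' : Expr) : Prop := Encl e = Encl e'

def OneWayOnly (e e' : Expr) : Prop := RewritesTo e e' ∧ ¬ RewritesTo e' e

theorem same_token_division_interchangeable_exact_one_positive
    (t : Token) (lo hi : ℚ) (hpos : 0 < lo) (hle : lo ≤ hi) (d : Dim) :
    Interchangeable (.Div (.Meas t lo hi d) (.Meas t lo hi d)) (.Exact 1 d) := by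
  ext v
  constructor
  · rintro ⟨σ, ⟨⟨h1, h2⟩, _⟩, rfl⟩
    exact ⟨σ, trivial, by
      simp [eval]
      exact (div_self (ne_of_gt (lt_of_lt_of_le hpos h1))).symm⟩
  · rintro ⟨σ, _, rfl⟩
    refine ⟨fun _ => lo, ⟨⟨le_refl _, hle⟩, ⟨le_refl _, hle⟩⟩, ?_⟩
    simp [eval]
    exact ne_of_gt hpos
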